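/- arXiv:1302.3507 — 2 statements merged into one kernel-verified Lean document; each statement's English description precedes it below -/
import Mathlib

section
/- Fix integers n ≥ k ≥ 2 and reals 0 < p ≤ q ≤ 1 with p q·C(n,k) ≤ 4·n·log n. Set γ' = 4e·(n·log n)/(p q·C(n,k)) and λ = 4e²·(n·log n)/(log γ'). Let G ~ H^{(k)}(n,p) and H ~ H^{(k)}(n,q) be independent. Then for all sufficiently large n, with probability at least 1 − e^{−n/2}, one has discP(G,H) ≤ λ. -/
open MeasureTheory Finset Filter

/-- Bernoulli measure on `Bool` with success probability `p`. -/
noncomputable def bern (p : ℝ) : Measure Bool :=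
  ENNReal.ofReal p • Measure.dirac true + ENNReal.ofReal (1 - p) • Measure.dirac false

/-- Product Bernoulli measure on subsets of `Finset (Fin n)` (indicator functions),
modelling the random hypergraph `H^{(k)}(n, p)`. -/
noncomputable def hypMeasure (n : ℕ) (p : ℝ) : Measure (Finset (Fin n) → Bool) :=
  Measure.pi fun _ => bern p

/-- The edge set of the `k`-uniform hypergraph determined by the outcome `ω`. -/
def edgesOf (n k : ℕ) (ω : Finset (Fin n) → Bool) : Finset (Finset (Fin n)) :=
  Finset.univ.filter fun s => s.card = k ∧ ω s = true

/-- `e(G_π ∩ H)`, the number of common edges of `G` permuted by `π` and `H`. -/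
def overlap (n : ℕ) (G H : Finset (Finset (Fin n))) (π : Equiv.Perm (Fin n)) : ℕ :=
  ((G.image fun e => e.image π) ∩ H).card

/-- The relative discrepancy `disc(G, H)`. -/
noncomputable def disc (n k : ℕ) (G H : Finset (Finset (Fin n))) : ℝ :=
  Finset.univ.sup' Finset.univ_nonempty fun π : Equiv.Perm (Fin n) =>
    |(overlap n G H π : ℝ) -
      ((G.card : ℝ) / (n.choose k)) * ((H.card : ℝ) / (n.choose k)) * (n.choose k)|

/-- The probabilistic discrepancy `discP(G, H)`. -/
noncomputable def discP (n k : ℕ) (p q : ℝ) (G H : Finset (Finset (Fin n))) : ℝ :=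
  Finset.univ.sup' Finset.univ_nonempty fun π : Equiv.Perm (Fin n) =>
    |(overlap n G H π : ℝ) - p * q * (n.choose k)|

/-- `N = C(n - ⌊n/k⌋, k - 1)`. -/
def Nk (k n : ℕ) : ℕ := (n - n / k).choose (k - 1)

/-!
A union bound over the `n!` permutations `π` and the `C(C(n,k), m)` families `S` of
`m = ⌊λ⌋ + 1` potential common edges: `S ⊆ E(G_π ∩ H)` has probability `(pq)^m`, so with
`μ = pq C(n,k)` the probability that some overlap reaches `m` is at most
`n! C(C(n,k), m) (pq)^m ≤ exp (n log n) (e μ / m)^m`. As `μ ≤ λ`, an overlap below `m`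
keeps `|e(G_π ∩ H) - μ| ≤ λ`. Writing `λ = e γ' μ / log γ'` and `L = log γ' ≥ 1`,
`m (log m - log μ - 1) ≥ λ (L - log L) ≥ λ L (1 - 1/e) = (e - 1) γ' μ = 4e(e - 1) n log n`,
which beats `n log n + n / 2`.
-/

open scoped Nat

lemma isProbabilityMeasure_bern {p : ℝ} (h0 : 0 ≤ p) (h1 : p ≤ 1) :
    IsProbabilityMeasure (bern p) := by
  constructor
  simp only [bern, Measure.add_apply, Measure.smul_apply, smul_eq_mul, measure_univ, mul_one]
  rw [← ENNReal.ofReal_add h0 (by linarith)]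
  norm_num

lemma bern_singleton_true (p : ℝ) : bern p {true} = ENNReal.ofReal p := by
  simp [bern]

lemma isProbabilityMeasure_hypMeasure (n : ℕ) {p : ℝ} (h0 : 0 ≤ p) (h1 : p ≤ 1) :
    IsProbabilityMeasure (hypMeasure n p) :=
  have := isProbabilityMeasure_bern h0 h1
  inferInstanceAs (IsProbabilityMeasure (Measure.pi _))

lemma hypMeasure_forall_eq_true (n : ℕ) {p : ℝ} (h0 : 0 ≤ p) (h1 : p ≤ 1)
    (T : Finset (Finset (Fin n))) :
    hypMeasure n p {ω | ∀ t ∈ T, ω t = true} = ENNReal.ofReal p ^ T.card := by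
  have := isProbabilityMeasure_bern h0 h1
  have hpi : {ω : Finset (Fin n) → Bool | ∀ t ∈ T, ω t = true} =
      Set.univ.pi fun t => if t ∈ T then {true} else Set.univ := by
    ext ω
    simp only [Set.mem_ofPred_eq, Set.mem_pi, Set.mem_univ, true_implies]
    refine forall_congr' fun t => ?_
    split_ifs <;> simp [*]
  rw [hypMeasure, hpi, Measure.pi_pi, ← Finset.prod_subset T.subset_univ
    fun t _ ht => by rw [if_neg ht, measure_univ], Finset.prod_congr rfl
    fun t ht => by rw [if_pos ht, bern_singleton_true], Finset.prod_const]

def commonEdgesEvent (n : ℕ) (π : Equiv.Perm (Fin n)) (S : Finset (Finset (Fin n))) :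
    Set ((Finset (Fin n) → Bool) × (Finset (Fin n) → Bool)) :=
  {ω | ∀ s ∈ S, ω (s.image π.symm) = true} ×ˢ {ω | ∀ s ∈ S, ω s = true}

lemma prod_hypMeasure_commonEdgesEvent (n : ℕ) {p q : ℝ} (hp0 : 0 ≤ p) (hp1 : p ≤ 1)
    (hq0 : 0 ≤ q) (hq1 : q ≤ 1) (π : Equiv.Perm (Fin n)) (S : Finset (Finset (Fin n))) :
    (hypMeasure n p).prod (hypMeasure n q) (commonEdgesEvent n π S) =
      ENNReal.ofReal (p * q) ^ S.card := by
  have := isProbabilityMeasure_hypMeasure n hq0 hq1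
  have hG : {ω : Finset (Fin n) → Bool | ∀ s ∈ S, ω (s.image π.symm) = true} =
      {ω | ∀ t ∈ S.image (·.image π.symm), ω t = true} := by
    simp
  rw [commonEdgesEvent, Measure.prod_prod, hG, hypMeasure_forall_eq_true n hp0 hp1,
    hypMeasure_forall_eq_true n hq0 hq1,
    Finset.card_image_of_injective S (Finset.image_injective π.symm.injective),
    ENNReal.ofReal_mul hp0, mul_pow]

lemma exists_commonEdgesEvent_of_le_overlap {n k m : ℕ}
    {ω : (Finset (Fin n) → Bool) × (Finset (Fin n) → Bool)} {π : Equiv.Perm (Fin n)}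
    (h : m ≤ overlap n (edgesOf n k ω.1) (edgesOf n k ω.2) π) :
    ∃ S ∈ ((univ : Finset (Fin n)).powersetCard k).powersetCard m,
      ω ∈ commonEdgesEvent n π S := by
  obtain ⟨S, hS, rfl⟩ := Finset.exists_subset_card_eq h
  refine ⟨S, Finset.mem_powersetCard.2 ⟨fun s hs => ?_, rfl⟩,
    fun s hs => ?_, fun s hs => ?_⟩
  all_goals
    obtain ⟨hG, hH⟩ := Finset.mem_inter.1 (hS hs)
    obtain ⟨e, he, rfl⟩ := Finset.mem_image.1 hG
    simp only [edgesOf, Finset.mem_filter, Finset.mem_univ, true_and] at he hH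
  · exact Finset.mem_powersetCard.2 ⟨subset_univ _, hH.1⟩
  · simpa [Finset.image_image] using he.2
  · exact hH.2

lemma prod_hypMeasure_exists_le_overlap_le (n k m : ℕ) {p q : ℝ} (hp0 : 0 ≤ p) (hp1 : p ≤ 1)
    (hq0 : 0 ≤ q) (hq1 : q ≤ 1) :
    (hypMeasure n p).prod (hypMeasure n q)
        {ω | ∃ π, m ≤ overlap n (edgesOf n k ω.1) (edgesOf n k ω.2) π} ≤
      ENNReal.ofReal (n ! * (n.choose k).choose m * (p * q) ^ m) := by
  set F := ((univ : Finset (Fin n)).powersetCard k).powersetCard m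
  calc _ ≤ (hypMeasure n p).prod (hypMeasure n q)
          (⋃ π, ⋃ S ∈ F, commonEdgesEvent n π S) :=
        measure_mono fun ω hω => by
          obtain ⟨π, hπ⟩ := hω
          obtain ⟨S, hS, hω⟩ := exists_commonEdgesEvent_of_le_overlap hπ
          exact Set.mem_iUnion.2 ⟨π, Set.mem_biUnion hS hω⟩
    _ ≤ ∑ π, ∑ S ∈ F, (hypMeasure n p).prod (hypMeasure n q) (commonEdgesEvent n π S) :=
        (measure_iUnion_fintype_le _ _).trans
          (Finset.sum_le_sum fun π _ => measure_biUnion_finset_le _ _)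
    _ = ∑ _π : Equiv.Perm (Fin n), ∑ _S ∈ F, ENNReal.ofReal (p * q) ^ m := by
        refine Finset.sum_congr rfl fun π _ => Finset.sum_congr rfl fun S hS => ?_
        rw [prod_hypMeasure_commonEdgesEvent n hp0 hp1 hq0 hq1,
          (Finset.mem_powersetCard.1 hS).2]
    _ = _ := by
        simp only [F, Finset.sum_const, Finset.card_univ, Fintype.card_perm, Fintype.card_fin,
          Finset.card_powersetCard, nsmul_eq_mul]
        rw [← ENNReal.ofReal_pow (by positivity), ENNReal.ofReal_mul (by positivity),
          ENNReal.ofReal_mul (by positivity), ENNReal.ofReal_natCast, ENNReal.ofReal_natCast,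
          mul_assoc]

lemma discP_le_of_forall_overlap_le {n k : ℕ} {p q lam : ℝ} {G H : Finset (Finset (Fin n))}
    (hμ0 : 0 ≤ p * q * n.choose k) (hμ : p * q * n.choose k ≤ lam)
    (h : ∀ π, (overlap n G H π : ℝ) ≤ lam) : discP n k p q G H ≤ lam :=
  Finset.sup'_le _ _ fun π _ => abs_sub_le_iff.2
    ⟨by linarith [h π], by linarith [(overlap n G H π).cast_nonneg (α := ℝ)]⟩

lemma ofReal_one_sub_le_prod_hypMeasure_discP_le {n k : ℕ} {p q lam x : ℝ} (hp0 : 0 ≤ p)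
    (hp1 : p ≤ 1) (hq0 : 0 ≤ q) (hq1 : q ≤ 1) (hμ : p * q * n.choose k ≤ lam)
    (hx : n ! * (n.choose k).choose (⌊lam⌋₊ + 1) * (p * q) ^ (⌊lam⌋₊ + 1) ≤ x) :
    ENNReal.ofReal (1 - x) ≤ (hypMeasure n p).prod (hypMeasure n q)
      {ω | discP n k p q (edgesOf n k ω.1) (edgesOf n k ω.2) ≤ lam} := by
  have := isProbabilityMeasure_hypMeasure n hp0 hp1
  have := isProbabilityMeasure_hypMeasure n hq0 hq1
  set P := (hypMeasure n p).prod (hypMeasure n q)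
  set T : Set ((Finset (Fin n) → Bool) × (Finset (Fin n) → Bool)) :=
    {ω | discP n k p q (edgesOf n k ω.1) (edgesOf n k ω.2) ≤ lam}
  have hμ0 : 0 ≤ p * q * n.choose k := by positivity
  have hcompl : Tᶜ ⊆
      {ω | ∃ π, ⌊lam⌋₊ + 1 ≤ overlap n (edgesOf n k ω.1) (edgesOf n k ω.2) π} := by
    intro ω hω
    rw [Set.mem_ofPred_eq]
    by_contra! hsmall
    refine hω (discP_le_of_forall_overlap_le hμ0 hμ fun π => ?_)
    exact (Nat.le_floor_iff (hμ0.trans hμ)).1 (Nat.lt_succ_iff.1 (hsmall π))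
  have hTc : P Tᶜ ≤ ENNReal.ofReal x :=
    (measure_mono hcompl).trans <|
      (prod_hypMeasure_exists_le_overlap_le n k _ hp0 hp1 hq0 hq1).trans
        (ENNReal.ofReal_le_ofReal hx)
  rw [ENNReal.ofReal_sub _ ((by positivity : (0 : ℝ) ≤ _).trans hx), ENNReal.ofReal_one,
    tsub_le_iff_right, ← measure_univ (μ := P)]
  exact (measure_univ_le_add_compl T).trans (by gcongr)

open Real

lemma choose_mul_pow_le (N m : ℕ) {r : ℝ} (hr : 0 ≤ r) :
    (N.choose m : ℝ) * r ^ m ≤ (exp 1 * (N * r) / m) ^ m := by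
  rcases m.eq_zero_or_pos with rfl | hm
  · simp
  have hm' : (0 : ℝ) < m := by exact_mod_cast hm
  have hfact : (m : ℝ) ^ m / m ! ≤ exp 1 ^ m := by
    simpa using pow_div_factorial_le_exp (x := m) hm'.le m
  calc (N.choose m : ℝ) * r ^ m ≤ (N : ℝ) ^ m / m ! * r ^ m := by
        gcongr; exact Nat.choose_le_pow_div m N
    _ = (N * r / m) ^ m * ((m : ℝ) ^ m / m !) := by
        rw [div_pow, mul_pow]; field_simp
    _ ≤ (N * r / m) ^ m * exp 1 ^ m := by gcongr
    _ = (exp 1 * (N * r) / m) ^ m := by ring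

lemma factorial_le_exp_mul_log (n : ℕ) : (n ! : ℝ) ≤ exp (n * log n) := by
  rcases n.eq_zero_or_pos with rfl | hn
  · simp
  calc (n ! : ℝ) ≤ (n : ℝ) ^ n := by exact_mod_cast n.factorial_le_pow
    _ = exp (n * log n) := by
        rw [← rpow_natCast, rpow_def_of_pos (by exact_mod_cast hn), mul_comm]

lemma factorial_mul_choose_mul_pow_le_exp {n N m : ℕ} {r : ℝ} (hr : 0 ≤ r)
    (hμ : 0 < N * r) (hm : 0 < m)
    (h : n * log n + n / 2 ≤ m * (log m - log (N * r) - 1)) :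
    (n ! : ℝ) * N.choose m * r ^ m ≤ exp (-n / 2) := by
  have hm' : (0 : ℝ) < m := by exact_mod_cast hm
  have hbase : exp 1 * (N * r) / m = exp (1 + log (N * r) - log m) := by
    rw [exp_sub, exp_add, exp_log hμ, exp_log hm']
  calc (n ! : ℝ) * N.choose m * r ^ m = n ! * (N.choose m * r ^ m) := mul_assoc _ _ _
    _ ≤ exp (n * log n) * exp (m * (1 + log (N * r) - log m)) := by
        rw [exp_nat_mul _ m, ← hbase]
        exact mul_le_mul (factorial_le_exp_mul_log n) (choose_mul_pow_le N m hr)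
          (by positivity) (by positivity)
    _ = exp (n * log n + m * (1 + log (N * r) - log m)) := (exp_add _ _).symm
    _ ≤ exp (-n / 2) := exp_le_exp.2 (by linarith)

lemma mul_log_sub_le_mul_log_sub {a b c : ℝ} (ha : 0 < a) (hab : a ≤ b) (hc : c ≤ log a) :
    a * (log a - c) ≤ b * (log b - c) :=
  mul_le_mul hab (by gcongr) (by linarith) (ha.le.trans hab)

section

variable {μ γ lam : ℝ}

lemma le_of_eq_exp_one_mul_mul_div_log (hlam : lam = exp 1 * γ * μ / log γ) (hμ : 0 ≤ μ)
    (hγ : 1 < γ) : μ ≤ lam := by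
  have hL : 0 < log γ := log_pos hγ
  rw [hlam, le_div_iff₀ hL]
  have : log γ ≤ exp 1 * γ :=
    (log_le_self (by linarith)).trans <|
      le_mul_of_one_le_left (by linarith) (one_le_exp zero_le_one)
  exact mul_le_mul_of_nonneg_left this hμ |>.trans_eq (by ring)

lemma sub_one_mul_le_mul_log_sub_of_eq (hlam : lam = exp 1 * γ * μ / log γ) (hμ : 0 < μ)
    (hγ : exp 1 ≤ γ) :
    (exp 1 - 1) * γ * μ ≤ lam * (log lam - log μ - 1) := by
  have hγ0 : 0 < γ := (exp_pos 1).trans_le hγ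
  set L := log γ
  have hL : 1 ≤ L := by simpa using log_le_log (exp_pos 1) hγ
  have hlam0 : 0 < lam := by rw [hlam]; positivity
  have hlamL : lam * L = exp 1 * γ * μ := by rw [hlam]; field_simp
  have hlog : log lam - log μ - 1 = L - log L := by
    rw [hlam, log_div (by positivity) (by positivity), log_mul (by positivity) hμ.ne',
      log_mul (exp_pos 1).ne' hγ0.ne', log_exp]
    ring
  have hlogL : exp 1 * log L ≤ L := by
    simpa [exp_log (by linarith : 0 < L)] using exp_one_mul_le_exp (x := log L)
  have key : lam * (exp 1 * log L) ≤ lam * L := mul_le_mul_of_nonneg_left hlogL hlam0.le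
  rw [hlog, ← mul_le_mul_iff_right₀ (exp_pos 1)]
  nlinarith

lemma sub_one_mul_le_floor_add_one_mul_log_sub (hlam : lam = exp 1 * γ * μ / log γ)
    (hμ : 0 < μ) (hγ : exp 1 ≤ γ) :
    (exp 1 - 1) * γ * μ ≤
      (⌊lam⌋₊ + 1 : ℕ) * (log (⌊lam⌋₊ + 1 : ℕ) - log μ - 1) := by
  have hgrowth := sub_one_mul_le_mul_log_sub_of_eq hlam hμ hγ
  have hlam0 : 0 < lam := hμ.trans_le <| le_of_eq_exp_one_mul_mul_div_log hlam hμ.le <|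
    (one_lt_exp_iff.2 one_pos).trans_le hγ
  have hrate : log μ + 1 ≤ log lam := by
    have hpos : 0 < (exp 1 - 1) * γ * μ := by
      have : 0 < exp 1 - 1 := by linarith [add_one_le_exp (1 : ℝ)]
      exact mul_pos (mul_pos this ((exp_pos 1).trans_le hγ)) hμ
    linarith [pos_of_mul_pos_right (hpos.trans_le hgrowth) hlam0.le]
  simp only [sub_sub] at hgrowth ⊢
  push_cast
  exact hgrowth.trans (mul_log_sub_le_mul_log_sub hlam0 (Nat.lt_floor_add_one lam).le hrate)

end

lemma natCast_le_mul_log {n : ℕ} (hn : 3 ≤ n) : (n : ℝ) ≤ n * log n := by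
  have : 1 ≤ log n := by
    rw [le_log_iff_exp_le (by positivity)]
    exact exp_one_lt_d9.le.trans <|
      (by norm_num : (2.7182818286 : ℝ) ≤ 3).trans (by exact_mod_cast hn)
  nlinarith

/-- upper bound for the probabilistic discrepancy when
`pq C(n,k) ≤ 4 n log n`, with `γ' = 4e n log n / (pq C(n,k))` and
`λ = 4e² n log n / log γ'`. -/
theorem stmt12 :
    ∃ n₀ : ℕ, ∀ n : ℕ, n₀ ≤ n → ∀ k : ℕ, 2 ≤ k → k ≤ n → ∀ p q : ℝ,
      0 < p → p ≤ q → q ≤ 1 →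
      p * q * (n.choose k) ≤ 4 * (n : ℝ) * Real.log n →
      ∀ γ' lam : ℝ,
        γ' = 4 * Real.exp 1 * ((n : ℝ) * Real.log n) / (p * q * (n.choose k)) →
        lam = 4 * Real.exp 2 * ((n : ℝ) * Real.log n) / Real.log γ' →
        ENNReal.ofReal (1 - Real.exp (-(n : ℝ) / 2)) ≤
          ((hypMeasure n p).prod (hypMeasure n q))
            {ω | discP n k p q (edgesOf n k ω.1) (edgesOf n k ω.2) ≤ lam} := by
  refine ⟨3, fun n hn k _ hkn p q hp hpq hq1 hμA γ' lam hγ hlam => ?_⟩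
  have hq : 0 < q := hp.trans_le hpq
  set μ := p * q * (n.choose k : ℝ)
  set A := (n : ℝ) * log n
  have hμ : 0 < μ := by have := Nat.choose_pos hkn; positivity
  have hγμ : γ' * μ = 4 * exp 1 * A := by rw [hγ]; field_simp
  have hγe : exp 1 ≤ γ' := by
    rw [hγ, le_div_iff₀ hμ]; linarith [mul_le_mul_of_nonneg_left hμA (exp_pos 1).le]
  have hlam' : lam = exp 1 * γ' * μ / log γ' := by
    rw [hlam, mul_assoc _ γ', hγμ, show (2 : ℝ) = 1 + 1 by norm_num, exp_add]; ring
  refine ofReal_one_sub_le_prod_hypMeasure_discP_le hp.le (hpq.trans hq1) hq.le hq1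
    (le_of_eq_exp_one_mul_mul_div_log hlam' hμ.le ((one_lt_exp_iff.2 one_pos).trans_le hγe))
    (factorial_mul_choose_mul_pow_le_exp (by positivity) (by rw [mul_comm]; exact hμ)
      (Nat.succ_pos _) ?_)
  rw [mul_comm _ (p * q)]
  refine le_trans ?_ (sub_one_mul_le_floor_add_one_mul_log_sub hlam' hμ hγe)
  -- `A + n / 2 ≤ 3A / 2 ≤ 4e(e - 1) A` as `n ≤ A`
  have hnA := natCast_le_mul_log hn
  have he : 2 ≤ exp 1 := by linarith [add_one_le_exp (1 : ℝ)]
  rw [mul_assoc, hγμ]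
  nlinarith [mul_le_mul_of_nonneg_right (by nlinarith : 4 ≤ (exp 1 - 1) * (4 * exp 1))
    ((Nat.cast_nonneg n).trans hnA)]
end

section
/- Fix an integer k ≥ 2 and let n be a multiple of k. Let L and R be disjoint finite sets with |L| = n/k and |R| = N, and let G̃ be the random bipartite graph between L and R in which each pair (u, w) ∈ L × R is an edge independently with probability p, where p·N ≥ 8. Call a vertex u ∈ L surviving if |deg_{G̃}(u) − pN| ≤ 2√(2pN). Then with probability at least 1 − 2e^{−n/(64k)}, at least n/(4k) vertices of L survive. -/
/-!
The degree of a vertex of `L` is binomial with parameters `N` and `p`, so its variance is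
`Np(1-p) ≤ pN` and by Chebyshev a vertex fails to survive with probability at most `1/8`.
The rows of the random bipartite graph are independent, so if fewer than a quarter of the
`m = n/k` vertices survive, then all vertices of some fixed set of `⌈3m/4⌉` vertices fail, and the
union bound over these sets gives probability at most `2^m 8^(-3m/4) = 2^(-5m/4) ≤ e^(-m/64)`.
-/

open MeasureTheory Finset

open ProbabilityTheory

section Bernoulli

variable {p : ℝ}

lemma isProbabilityMeasure_bern_s14 (hp0 : 0 ≤ p) (hp1 : p ≤ 1) : IsProbabilityMeasure (bern p) := by
  constructor
  simp [bern, ← ENNReal.ofReal_add hp0 (sub_nonneg.2 hp1)]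

lemma integral_bern (hp0 : 0 ≤ p) (hp1 : p ≤ 1) (f : Bool → ℝ) :
    ∫ b, f b ∂bern p = p * f true + (1 - p) * f false := by
  rw [bern, integral_add_measure, integral_smul_measure, integral_smul_measure,
    integral_dirac, integral_dirac, ENNReal.toReal_ofReal hp0,
    ENNReal.toReal_ofReal (sub_nonneg.2 hp1), smul_eq_mul, smul_eq_mul]
  all_goals exact Integrable.of_finite.smul_measure ENNReal.ofReal_ne_top

lemma variance_bern (hp0 : 0 ≤ p) (hp1 : p ≤ 1) :
    Var[fun b : Bool => if b then (1 : ℝ) else 0; bern p] = p * (1 - p) := by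
  rw [variance_eq_integral (by fun_prop), integral_bern hp0 hp1, integral_bern hp0 hp1]
  simp only [if_true, Bool.false_eq_true, if_false]
  ring

end Bernoulli

section Degree

variable {κ : Type*} [Fintype κ] {p : ℝ}

variable (κ) in
lemma integral_card_filter_eq_true (hp0 : 0 ≤ p) (hp1 : p ≤ 1) :
    ∫ g, (#{w | g w = true} : ℝ) ∂(Measure.pi fun _ : κ => bern p) = Fintype.card κ * p := by
  have := isProbabilityMeasure_bern_s14 hp0 hp1
  simp_rw [Finset.natCast_card_filter]
  rw [integral_finsetSum _ fun _ _ => Integrable.of_finite]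
  simp only [integral_comp_eval (X := fun _ : κ => Bool)
    (f := fun b : Bool => if b then (1 : ℝ) else 0) (by fun_prop), integral_bern hp0 hp1]
  simp

variable (κ) in
lemma variance_card_filter_eq_true (hp0 : 0 ≤ p) (hp1 : p ≤ 1) :
    Var[fun g : κ → Bool => (#{w | g w = true} : ℝ); Measure.pi fun _ : κ => bern p] =
      Fintype.card κ * (p * (1 - p)) := by
  have := isProbabilityMeasure_bern_s14 hp0 hp1
  have h := variance_sum_pi (X := fun (_ : κ) (b : Bool) => if b then (1 : ℝ) else 0)
    (μ := fun _ => bern p) fun _ => MemLp.of_discrete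
  simp only [variance_bern hp0 hp1, Finset.sum_const, Finset.card_univ, nsmul_eq_mul] at h
  rw [← h]
  congr 1
  ext g
  rw [Finset.sum_apply, Finset.natCast_card_filter]

variable (κ) in
lemma measure_lt_abs_card_filter_eq_true_sub_le (hp0 : 0 ≤ p) (hp1 : p ≤ 1) {c : ℝ}
    (hc : 0 < c) :
    Measure.pi (fun _ : κ => bern p) {g | c < |(#{w | g w = true} : ℝ) - Fintype.card κ * p|} ≤
      ENNReal.ofReal (Fintype.card κ * (p * (1 - p)) / c ^ 2) := by
  have := isProbabilityMeasure_bern_s14 hp0 hp1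
  have chebyshev := meas_ge_le_variance_div_sq
    (X := fun g : κ → Bool => (#{w | g w = true} : ℝ)) (μ := Measure.pi fun _ => bern p)
    MemLp.of_discrete hc
  rw [integral_card_filter_eq_true κ hp0 hp1, variance_card_filter_eq_true κ hp0 hp1]
    at chebyshev
  exact (measure_mono fun g (hg : c < _) => hg.le).trans chebyshev

lemma measure_not_abs_card_filter_eq_true_sub_le (hp0 : 0 ≤ p) (hp1 : p ≤ 1) {N : ℕ}
    (hpN : 8 ≤ p * N) :
    Measure.pi (fun _ : Fin N => bern p)
        {g | ¬ |(#{w | g w = true} : ℝ) - p * N| ≤ 2 * √(2 * p * N)} ≤ ENNReal.ofReal (1 / 8) := by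
  have hc : (2 * √(2 * p * N)) ^ 2 = 8 * (p * N) := by
    rw [mul_pow, Real.sq_sqrt (by linarith)]; ring
  have h := measure_lt_abs_card_filter_eq_true_sub_le (Fin N) hp0 hp1
    (c := 2 * √(2 * p * N)) (mul_pos two_pos (Real.sqrt_pos.2 (by linarith)))
  simp only [Fintype.card_fin, hc, mul_comm (N : ℝ) p] at h
  simp only [not_le]
  refine h.trans (ENNReal.ofReal_le_ofReal ?_)
  rw [div_le_iff₀ (by linarith)]
  nlinarith

end Degree

lemma two_pow_mul_one_div_eight_pow_le_exp {m j : ℕ} (h : 3 * m ≤ 4 * j) :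
    (2 : ℝ) ^ m * (1 / 8) ^ j ≤ Real.exp (-m / 64) := by
  refine le_of_pow_le_pow_left₀ four_ne_zero (Real.exp_pos _).le ?_
  calc ((2 : ℝ) ^ m * (1 / 8) ^ j) ^ 4
    _ = 16 ^ m * (1 / 8) ^ (4 * j) := by
      rw [mul_pow, ← pow_mul, ← pow_mul, mul_comm m, mul_comm j, pow_mul]; norm_num
    _ ≤ 16 ^ m * (1 / 8) ^ (3 * m) := by
      gcongr 16 ^ m * ?_; exact pow_le_pow_of_le_one (by norm_num) (by norm_num) h
    _ = (1 / 32) ^ m := by rw [pow_mul, ← mul_pow]; norm_num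
    _ ≤ Real.exp (-1 / 16) ^ m := by gcongr; linarith [Real.add_one_le_exp (-1 / 16)]
    _ = Real.exp (-m / 64) ^ 4 := by rw [← Real.exp_nat_mul, ← Real.exp_nat_mul]; ring_nf

section Rows

variable {ι κ α : Type*} [Fintype ι] [Fintype κ] [MeasurableSpace α]
  (ν : Measure α) [IsProbabilityMeasure ν]

lemma measure_pi_forall_row_mem {A : Set (κ → α)} (hA : MeasurableSet A) (S : Finset ι) :
    Measure.pi (fun _ : ι × κ => ν) {ω | ∀ u ∈ S, (fun w => ω (u, w)) ∈ A} =
      Measure.pi (fun _ : κ => ν) A ^ #S := by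
  have hcurry : {ω : ι × κ → α | ∀ u ∈ S, (fun w => ω (u, w)) ∈ A} =
      MeasurableEquiv.curry ι κ α ⁻¹' (Set.pi S fun _ => A) := rfl
  rw [hcurry, ← Measure.map_apply (MeasurableEquiv.measurable _)
      (MeasurableSet.pi S.countable_toSet fun _ _ => hA), ← Measure.infinitePi_eq_pi,
    Measure.infinitePi_map_curry (fun _ _ => ν), Measure.infinitePi_eq_pi (μ := fun _ : κ => ν),
    Measure.infinitePi_pi (μ := fun _ : ι => Measure.pi fun _ : κ => ν) (t := fun _ => A)
      fun _ _ => hA, prod_const]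

lemma measure_le_card_rows_mem_le {A : Set (κ → α)} (hA : MeasurableSet A)
    [DecidablePred (· ∈ A)] (j : ℕ) :
    Measure.pi (fun _ : ι × κ => ν) {ω | j ≤ #{u | (fun w => ω (u, w)) ∈ A}} ≤
      (Fintype.card ι).choose j * Measure.pi (fun _ : κ => ν) A ^ j := by
  have hcover : {ω : ι × κ → α | j ≤ #{u | (fun w => ω (u, w)) ∈ A}} ⊆
      ⋃ S ∈ powersetCard j (univ : Finset ι), {ω | ∀ u ∈ S, (fun w => ω (u, w)) ∈ A} := by
    intro ω hω
    obtain ⟨S, hS, hSj⟩ := exists_subset_card_eq hω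
    exact Set.mem_biUnion (mem_powersetCard.2 ⟨subset_univ S, hSj⟩)
      fun u hu => (mem_filter.1 (hS hu)).2
  calc _ ≤ ∑ S ∈ powersetCard j (univ : Finset ι),
          Measure.pi (fun _ : ι × κ => ν) {ω | ∀ u ∈ S, (fun w => ω (u, w)) ∈ A} :=
        (measure_mono hcover).trans (measure_biUnion_finset_le _ _)
    _ = _ := by
      rw [sum_congr rfl fun S hS => by
        rw [measure_pi_forall_row_mem ν hA, (mem_powersetCard.1 hS).2], sum_const,
        card_powersetCard, card_univ, nsmul_eq_mul]

lemma measureReal_four_mul_card_rows_mem_lt_le {G : Set (κ → α)} (hG : MeasurableSet G)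
    [DecidablePred (· ∈ G)] (hbad : Measure.pi (fun _ : κ => ν) Gᶜ ≤ ENNReal.ofReal (1 / 8)) :
    (Measure.pi fun _ : ι × κ => ν).real {ω | 4 * #{u | (fun w => ω (u, w)) ∈ G} < Fintype.card ι}
      ≤ Real.exp (-(Fintype.card ι) / 64) := by
  set m := Fintype.card ι
  set j := (3 * m + 3) / 4 -- `⌈3m/4⌉`
  have hsub : {ω : ι × κ → α | 4 * #{u | (fun w => ω (u, w)) ∈ G} < m} ⊆
      {ω | j ≤ #{u | (fun w => ω (u, w)) ∈ Gᶜ}} := by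
    intro ω hω
    have hsplit := card_filter_add_card_filter_not (s := univ)
      (fun u => (fun w => ω (u, w)) ∈ G)
    rw [card_univ] at hsplit
    change 4 * _ < m at hω
    change j ≤ #(filter (fun u => (fun w => ω (u, w)) ∉ G) univ)
    omega
  have hmeasure : Measure.pi (fun _ : ι × κ => ν) {ω | j ≤ #{u | (fun w => ω (u, w)) ∈ Gᶜ}} ≤
      ENNReal.ofReal (m.choose j * (1 / 8) ^ j) := by
    refine (measure_le_card_rows_mem_le ν hG.compl j).trans ?_
    rw [ENNReal.ofReal_mul (by positivity), ENNReal.ofReal_natCast,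
      ENNReal.ofReal_pow (by norm_num)]
    gcongr
  calc _ ≤ _ := measureReal_mono hsub
    _ ≤ m.choose j * (1 / 8) ^ j := ENNReal.toReal_le_of_le_ofReal (by positivity) hmeasure
    _ ≤ 2 ^ m * (1 / 8) ^ j := by gcongr; exact_mod_cast Nat.choose_le_two_pow m j
    _ ≤ _ := two_pow_mul_one_div_eight_pow_le_exp (by omega)

end Rows

theorem stmt14_general (k : ℕ) (n : ℕ) (hkn : k ∣ n) (N : ℕ)
    (p : ℝ) (hp0 : 0 ≤ p) (hp1 : p ≤ 1) (hpN : 8 ≤ p * N) :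
    ENNReal.ofReal (1 - 2 * Real.exp (-(n : ℝ) / (64 * k))) ≤
      (Measure.pi fun _ : Fin (n / k) × Fin N => bern p)
        {ω | (n : ℝ) / (4 * k) ≤
          ((Finset.univ.filter fun u : Fin (n / k) =>
            |(((Finset.univ.filter fun w : Fin N => ω (u, w) = true).card : ℝ)) - p * N| ≤
              2 * Real.sqrt (2 * p * N)).card : ℝ)} := by
  have := isProbabilityMeasure_bern_s14 hp0 hp1
  set μ := Measure.pi fun _ : Fin (n / k) × Fin N => bern p
  set G : Set (Fin N → Bool) := {g | |(#{w | g w = true} : ℝ) - p * N| ≤ 2 * √(2 * p * N)}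
  have hfew := measureReal_four_mul_card_rows_mem_lt_le (ι := Fin (n / k)) (bern p)
    (Set.toFinite G).measurableSet (measure_not_abs_card_filter_eq_true_sub_le hp0 hp1 hpN)
  have hm : (n : ℝ) / k = (n / k : ℕ) := (Nat.cast_div_charZero hkn).symm
  have hexp : Real.exp (-(n : ℝ) / (64 * k)) = Real.exp (-(n / k : ℕ) / 64) := by
    rw [← hm]; ring_nf
  set E := {ω : Fin (n / k) × Fin N → Bool |
    (n : ℝ) / (4 * k) ≤ (#{u | (fun w => ω (u, w)) ∈ G} : ℝ)}
  have hsub : Eᶜ ⊆ {ω | 4 * #{u | (fun w => ω (u, w)) ∈ G} < n / k} := fun ω hω => by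
    rw [Set.mem_compl_iff, Set.mem_ofPred_eq, not_le,
      show (n : ℝ) / (4 * k) = (n / k : ℕ) / 4 by rw [← hm]; ring] at hω
    exact_mod_cast (lt_div_iff₀' four_pos).1 hω
  rw [Fintype.card_fin, ← hexp] at hfew
  have hcompl : μ.real Eᶜ ≤ Real.exp (-(n : ℝ) / (64 * k)) :=
    (measureReal_mono hsub (measure_ne_top μ _)).trans hfew
  change ENNReal.ofReal _ ≤ μ E
  rw [ENNReal.ofReal_le_iff_le_toReal (measure_ne_top μ E), ← measureReal_def]
  linarith [probReal_add_probReal_compl (μ := μ) (Set.toFinite E).measurableSet,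
    Real.exp_pos (-(n : ℝ) / (64 * k))]

/-- in the random bipartite graph between `L` (of size `n/k`)
and `R` (of size `N`) with edge probability `p`, with probability at least
`1 - 2e^{-n/(64k)}` at least `n/(4k)` vertices of `L` survive, i.e. have degree
within `2√(2pN)` of `pN`. -/
theorem stmt14 (k : ℕ) (hk : 2 ≤ k) (n : ℕ) (hkn : k ∣ n) (N : ℕ) (hN : 0 < N)
    (p : ℝ) (hp0 : 0 ≤ p) (hp1 : p ≤ 1) (hpN : 8 ≤ p * N) :
    ENNReal.ofReal (1 - 2 * Real.exp (-(n : ℝ) / (64 * k))) ≤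
      (Measure.pi fun _ : Fin (n / k) × Fin N => bern p)
        {ω | (n : ℝ) / (4 * k) ≤
          ((Finset.univ.filter fun u : Fin (n / k) =>
            |(((Finset.univ.filter fun w : Fin N => ω (u, w) = true).card : ℝ)) - p * N| ≤
              2 * Real.sqrt (2 * p * N)).card : ℝ)} :=
  stmt14_general k n hkn N p hp0 hp1 hpN
end
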